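/- arXiv:2212.08199 — 2 statements merged into one kernel-verified Lean document; each statement's English description precedes it below -/
import Mathlib

section
/- Neural ODE limit (Theorem 4.2, first case). Fix d ≥ 1, an input x ∈ ℝ^d, an activation σ ∈ C³(ℝ,ℝ) with σ(0)=0, σ'(0)=1, bounded third derivative, and σ Lipschitz. Let Ā ∈ H¹([0,1], ℝ^{d×d}) and b̄ ∈ H¹([0,1], ℝ^d). For each L ∈ ℕ define the hidden states h_0^{(L)} = x and h_{k+1}^{(L)} = h_k^{(L)} + L^{-1} σ_d(Ā_{k/L} h_k^{(L)} + b̄_{k/L}) for k = 0,…,L−1, and the piecewise-constant interpolation H̄_t^{(L)} = h_k^{(L)} for k/L ≤ t < (k+1)/L (with H̄_1^{(L)} = h_L^{(L)}). Let H : [0,1] → ℝ^d be the solution of the neural ODE dH_t/dt = σ_d(Ā_t H_t + b̄_t) with H_0 = x. Then lim_{L→∞} sup_{0 ≤ t ≤ 1} ‖H_t − H̄_t^{(L)}‖ = 0. -/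
open MeasureTheory Filter Set Topology

/-- Componentwise application of a scalar function to a vector in `ℝ^d`. -/
noncomputable def sigd {d : ℕ} (σ : ℝ → ℝ) (z : EuclideanSpace ℝ (Fin d)) :
    EuclideanSpace ℝ (Fin d) :=
  WithLp.toLp 2 (fun i => σ (z i))

/-!
The residual network is the explicit Euler scheme with step `1/L` for `H' = f t H`, where
`f t y = σ_d(Ā_t y + b̄_t)`. As primitives of integrable functions, `Ā` and `b̄` are continuous,
so `f t` is `M`-Lipschitz uniformly in `t ∈ [0,1]` and `t ↦ f t (H t)` is uniformly continuous,
with a modulus `ω` at scale `1/L`. By the mean value inequality each Euler step commits a local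
error of at most `ω / L`, and the discrete Grönwall inequality turns this into the bound
`ω e^M` at the nodes `k/L`. Between nodes, uniform continuity of `H` controls the
piecewise-constant interpolation.
-/

theorem lipschitzWith_sigd {d : ℕ} {σ : ℝ → ℝ} {K : NNReal} (hσ : LipschitzWith K σ) :
    LipschitzWith K (sigd (d := d) σ) := by
  refine LipschitzWith.of_dist_le_mul fun y z => ?_
  simp only [EuclideanSpace.dist_eq]
  have hcoord : ∀ i, dist (sigd σ y i) (sigd σ z i) ^ 2 ≤ (K : ℝ) ^ 2 * dist (y i) (z i) ^ 2 :=
    fun i => by rw [← mul_pow]; exact pow_le_pow_left₀ dist_nonneg (hσ.dist_le_mul _ _) 2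
  calc √(∑ i, dist (sigd σ y i) (sigd σ z i) ^ 2)
      ≤ √(∑ i, (K : ℝ) ^ 2 * dist (y i) (z i) ^ 2) :=
        Real.sqrt_le_sqrt (Finset.sum_le_sum fun i _ => hcoord i)
    _ = K * √(∑ i, dist (y i) (z i) ^ 2) := by
        rw [← Finset.mul_sum, Real.sqrt_mul (by positivity), Real.sqrt_sq K.coe_nonneg]

theorem continuousOn_of_eq_add_intervalIntegral {E : Type*} [NormedAddCommGroup E]
    [NormedSpace ℝ E] {F g : ℝ → E} {a b : ℝ} (hab : a ≤ b) (hg : IntegrableOn g (Icc a b))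
    (hF : ∀ t ∈ Icc a b, F t = F a + ∫ s in a..t, g s) : ContinuousOn F (Icc a b) := by
  have hprim := intervalIntegral.continuousOn_primitive_interval (μ := volume) (a := a) (b := b)
    (f := g) (by rwa [uIcc_of_le hab])
  rw [uIcc_of_le hab] at hprim
  exact (continuousOn_const.add hprim).congr hF

theorem discrete_gronwall_of_lt {u : ℕ → ℝ} {c b : ℝ} {N : ℕ} (hu : ∀ n, 0 ≤ u n)
    (hc : 0 ≤ c) (hb : 0 ≤ b) (hstep : ∀ n < N, u (n + 1) ≤ (1 + c) * u n + b)
    {n : ℕ} (hn : n ≤ N) : u n ≤ (u 0 + n * b) * Real.exp (n * c) := by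
  -- freezing `u` after step `N` makes the recursion hold for all `n`
  have hfrozen : ∀ n ≥ 0, u (min (n + 1) N) ≤ (1 + c) * u (min n N) + b := by
    intro n _
    rcases lt_or_ge n N with h | h
    · rw [min_eq_left h, min_eq_left h.le]
      exact hstep n h
    · rw [min_eq_right h, min_eq_right (h.trans n.le_succ)]
      nlinarith [hu N]
  simpa [min_eq_left hn] using
    discrete_gronwall (u := fun n => u (min n N)) (c := fun _ => c) (b := fun _ => b)
      (hu _) hfrozen (fun _ _ => hc) (fun _ _ => hb) (Nat.zero_le n)

theorem natCast_div_mem_Icc {k L : ℕ} (hk : k ≤ L) : (k : ℝ) / L ∈ Icc (0 : ℝ) 1 :=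
  ⟨by positivity, div_le_one_of_le₀ (by exact_mod_cast hk) L.cast_nonneg⟩

theorem natFloor_mul_le {L : ℕ} {t : ℝ} (ht : t ≤ 1) : ⌊(L : ℝ) * t⌋₊ ≤ L :=
  Nat.floor_le_of_le (mul_le_of_le_one_right L.cast_nonneg ht)

theorem dist_natFloor_mul_div_le {L : ℕ} (hL : 0 < L) {t : ℝ} (ht : 0 ≤ t) :
    dist t (⌊(L : ℝ) * t⌋₊ / L) ≤ (L : ℝ)⁻¹ := by
  have hL' : (0 : ℝ) < L := by exact_mod_cast hL
  have hle : (⌊(L : ℝ) * t⌋₊ : ℝ) / L ≤ t := by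
    rw [div_le_iff₀ hL', mul_comm]
    exact Nat.floor_le (by positivity)
  have hlt : t < (⌊(L : ℝ) * t⌋₊ + 1 : ℝ) / L := by
    rw [lt_div_iff₀ hL', mul_comm]
    exact Nat.lt_floor_add_one _
  rw [Real.dist_eq, abs_of_nonneg (sub_nonneg.2 hle)]
  rw [add_div, div_eq_mul_inv 1, one_mul] at hlt
  linarith

section Euler

variable {E : Type*} [NormedAddCommGroup E] [NormedSpace ℝ E]

theorem norm_sub_sub_smul_le_of_hasDerivWithinAt {H g : ℝ → E} {a b ω : ℝ} (hab : a ≤ b)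
    (hH : ∀ s ∈ Icc a b, HasDerivWithinAt H (g s) (Icc a b) s)
    (hg : ∀ s ∈ Icc a b, ‖g s - g a‖ ≤ ω) :
    ‖H b - H a - (b - a) • g a‖ ≤ ω * (b - a) := by
  have hderiv : ∀ s ∈ Icc a b,
      HasDerivWithinAt (fun s => H s - (s - a) • g a) (g s - g a) (Icc a b) s := fun s hs => by
    simpa using (hH s hs).fun_sub (((hasDerivWithinAt_id s _).sub_const a).smul_const (g a))
  simpa [sub_right_comm] using norm_image_sub_le_of_norm_deriv_le_segment' hderiv
    (fun s hs => hg s (Ico_subset_Icc_self hs)) b (right_mem_Icc.2 hab)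

theorem norm_sub_euler_step_le {F : E → E} {M : NNReal} (hF : LipschitzWith M F) {u v y : E}
    {τ ω : ℝ} (hτ : 0 ≤ τ) (hloc : ‖v - u - τ • F u‖ ≤ ω * τ) :
    ‖v - (y + τ • F y)‖ ≤ (1 + M * τ) * ‖u - y‖ + ω * τ := by
  have hsplit : v - (y + τ • F y) = (v - u - τ • F u) + (u - y) + τ • (F u - F y) := by
    rw [smul_sub]; abel
  have hlip : ‖τ • (F u - F y)‖ ≤ τ * (M * ‖u - y‖) := by
    rw [norm_smul, Real.norm_of_nonneg hτ]
    exact mul_le_mul_of_nonneg_left (hF.norm_sub_le u y) hτ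
  rw [hsplit]
  calc _ ≤ ‖v - u - τ • F u‖ + ‖u - y‖ + ‖τ • (F u - F y)‖ := norm_add₃_le
    _ ≤ ω * τ + ‖u - y‖ + τ * (M * ‖u - y‖) := by gcongr
    _ = (1 + M * τ) * ‖u - y‖ + ω * τ := by ring

variable {f : ℝ → E → E} {H : ℝ → E} {M : NNReal}

theorem norm_sub_euler_le_of_modulus (hf : ∀ t ∈ Icc (0 : ℝ) 1, LipschitzWith M (f t))
    (hH : ∀ t ∈ Icc (0 : ℝ) 1, HasDerivWithinAt H (f t (H t)) (Icc 0 1) t)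
    {L : ℕ} (hL : 0 < L) {y : ℕ → E} (hy0 : y 0 = H 0)
    (hy : ∀ k < L, y (k + 1) = y k + (L : ℝ)⁻¹ • f (k / L) (y k))
    {ω : ℝ} (hω : 0 ≤ ω) (hmod : ∀ s ∈ Icc (0 : ℝ) 1, ∀ t ∈ Icc (0 : ℝ) 1,
      dist s t ≤ (L : ℝ)⁻¹ → dist (f s (H s)) (f t (H t)) ≤ ω)
    {k : ℕ} (hk : k ≤ L) : ‖H (k / L) - y k‖ ≤ ω * Real.exp M := by
  have hτ : (0 : ℝ) < (L : ℝ)⁻¹ := by positivity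
  have hstep : ∀ j < L, ‖H ((j + 1 : ℕ) / L) - y (j + 1)‖ ≤
      (1 + M * (L : ℝ)⁻¹) * ‖H (j / L) - y j‖ + ω * (L : ℝ)⁻¹ := by
    intro j hj
    have ht₀ := natCast_div_mem_Icc hj.le
    have ht₁ : ((j + 1 : ℕ) : ℝ) / L = j / L + (L : ℝ)⁻¹ := by push_cast; ring
    have hsub : Icc ((j : ℝ) / L) (j / L + (L : ℝ)⁻¹) ⊆ Icc 0 1 :=
      Icc_subset_Icc ht₀.1 (ht₁ ▸ (natCast_div_mem_Icc hj).2)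
    have hloc := norm_sub_sub_smul_le_of_hasDerivWithinAt (le_add_of_nonneg_right hτ.le)
      (fun s hs => (hH s (hsub hs)).mono hsub) (fun s hs => by
        rw [← dist_eq_norm]
        refine hmod s (hsub hs) _ ht₀ ?_
        exact (Real.dist_le_of_mem_Icc hs (left_mem_Icc.2 (le_add_of_nonneg_right hτ.le))).trans
          (add_sub_cancel_left _ _).le)
    rw [ht₁, hy j hj]
    exact norm_sub_euler_step_le (hf _ ht₀) hτ.le (by simpa using hloc)
  have hkL : (k : ℝ) * (L : ℝ)⁻¹ ≤ 1 := by
    rw [← div_eq_mul_inv]; exact (natCast_div_mem_Icc hk).2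
  calc ‖H (k / L) - y k‖
      ≤ (‖H ((0 : ℕ) / L) - y 0‖ + k * (ω * (L : ℝ)⁻¹)) * Real.exp (k * (M * (L : ℝ)⁻¹)) :=
        discrete_gronwall_of_lt (u := fun j => ‖H (j / L) - y j‖) (fun _ => norm_nonneg _)
          (by positivity) (by positivity) hstep hk
    _ = (k * (L : ℝ)⁻¹) * ω * Real.exp ((k * (L : ℝ)⁻¹) * M) := by
        simp only [Nat.cast_zero, zero_div, hy0, sub_self, norm_zero, zero_add]; ring_nf
    _ ≤ 1 * ω * Real.exp (1 * M) := by gcongr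
    _ = ω * Real.exp M := by rw [one_mul, one_mul]

theorem tendsto_iSup_norm_sub_euler (hf : ∀ t ∈ Icc (0 : ℝ) 1, LipschitzWith M (f t))
    (hH : ∀ t ∈ Icc (0 : ℝ) 1, HasDerivWithinAt H (f t (H t)) (Icc 0 1) t)
    (hg : ContinuousOn (fun t => f t (H t)) (Icc 0 1))
    {y : ℕ → ℕ → E} (hy0 : ∀ L, y L 0 = H 0)
    (hy : ∀ L : ℕ, ∀ k < L, y L (k + 1) = y L k + (L : ℝ)⁻¹ • f (k / L) (y L k)) :
    Tendsto (fun L : ℕ => ⨆ t : Icc (0 : ℝ) 1, ‖H t - y L ⌊(L : ℝ) * t⌋₊‖) atTop (𝓝 0) := by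
  have hHc : ContinuousOn H (Icc 0 1) := fun t ht => (hH t ht).continuousWithinAt
  rw [Metric.tendsto_nhds]
  intro ε hε
  set ω := ε / (2 * (1 + Real.exp M))
  have hω : 0 < ω := by positivity
  obtain ⟨ηg, hηg, hg_mod⟩ := Metric.uniformContinuousOn_iff_le.1
    (isCompact_Icc.uniformContinuousOn_of_continuous hg) ω hω
  obtain ⟨ηH, hηH, hH_mod⟩ := Metric.uniformContinuousOn_iff_le.1
    (isCompact_Icc.uniformContinuousOn_of_continuous hHc) ω hω
  filter_upwards [eventually_gt_atTop 0, (tendsto_inv_atTop_zero.comp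
    tendsto_natCast_atTop_atTop).eventually (Iic_mem_nhds (lt_min hηg hηH))] with L hL hLinv
  have hLη : (L : ℝ)⁻¹ ≤ min ηg ηH := hLinv
  have hsup : (⨆ t : Icc (0 : ℝ) 1, ‖H t - y L ⌊(L : ℝ) * t⌋₊‖) ≤ ω * (1 + Real.exp M) := by
    refine Real.iSup_le (fun ⟨t, ht⟩ => ?_) (by positivity)
    have hk := natFloor_mul_le (L := L) ht.2
    have hdist := dist_natFloor_mul_div_le hL ht.1
    calc ‖H t - y L ⌊(L : ℝ) * t⌋₊‖
        ≤ ‖H t - H (⌊(L : ℝ) * t⌋₊ / L)‖ + ‖H (⌊(L : ℝ) * t⌋₊ / L) - y L ⌊(L : ℝ) * t⌋₊‖ :=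
          norm_sub_le_norm_sub_add_norm_sub _ _ _
      _ ≤ ω + ω * Real.exp M := by
          gcongr
          · rw [← dist_eq_norm]
            exact hH_mod t ht _ (natCast_div_mem_Icc hk) (hdist.trans (hLη.trans (min_le_right _ _)))
          · exact norm_sub_euler_le_of_modulus hf hH hL (hy0 L) (hy L) hω.le
              (fun s hs t ht hst => hg_mod s hs t ht (hst.trans (hLη.trans (min_le_left _ _)))) hk
      _ = ω * (1 + Real.exp M) := by ring
  rw [Real.dist_eq, sub_zero, abs_of_nonneg (Real.iSup_nonneg fun _ => norm_nonneg _)]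
  calc _ ≤ ω * (1 + Real.exp M) := hsup
    _ = ε / 2 := by simp only [ω]; field_simp
    _ < ε := half_lt_self hε

end Euler

theorem neural_ode_limit_general
    (d : ℕ) (x : EuclideanSpace ℝ (Fin d))
    -- activation function
    (σ : ℝ → ℝ)
    (K : NNReal) (hσLip : LipschitzWith K σ)
    -- weights: Ā, b̄ belong to H¹([0,1])
    (Abar : ℝ → (EuclideanSpace ℝ (Fin d) →L[ℝ] EuclideanSpace ℝ (Fin d)))
    (bbar : ℝ → EuclideanSpace ℝ (Fin d))
    (A' : ℝ → (EuclideanSpace ℝ (Fin d) →L[ℝ] EuclideanSpace ℝ (Fin d)))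
    (b' : ℝ → EuclideanSpace ℝ (Fin d))
    (hA'L2 : MemLp A' 2 (volume.restrict (Icc (0:ℝ) 1)))
    (hb'L2 : MemLp b' 2 (volume.restrict (Icc (0:ℝ) 1)))
    (hAbar : ∀ t ∈ Icc (0:ℝ) 1, Abar t = Abar 0 + ∫ s in (0:ℝ)..t, A' s)
    (hbbar : ∀ t ∈ Icc (0:ℝ) 1, bbar t = bbar 0 + ∫ s in (0:ℝ)..t, b' s)
    -- hidden states of the residual network of depth L
    (h : ℕ → ℕ → EuclideanSpace ℝ (Fin d))
    (hh0 : ∀ L : ℕ, h L 0 = x)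
    (hhrec : ∀ L : ℕ, ∀ k < L, h L (k+1) =
      h L k + ((L:ℝ))⁻¹ • sigd σ (Abar ((k:ℝ)/(L:ℝ)) (h L k) + bbar ((k:ℝ)/(L:ℝ))))
    -- solution of the neural ODE
    (H : ℝ → EuclideanSpace ℝ (Fin d)) (hH0 : H 0 = x)
    (hHode : ∀ t ∈ Icc (0:ℝ) 1, HasDerivAt H (sigd σ (Abar t (H t) + bbar t)) t) :
    Tendsto (fun L : ℕ => ⨆ t : Icc (0:ℝ) 1, ‖H t - h L ⌊(L:ℝ) * (t:ℝ)⌋₊‖)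
      atTop (nhds 0) := by
  have hA : ContinuousOn Abar (Icc 0 1) :=
    continuousOn_of_eq_add_intervalIntegral zero_le_one (hA'L2.integrable one_le_two) hAbar
  have hb : ContinuousOn bbar (Icc 0 1) :=
    continuousOn_of_eq_add_intervalIntegral zero_le_one (hb'L2.integrable one_le_two) hbbar
  have hH : ContinuousOn H (Icc 0 1) := fun t ht => (hHode t ht).continuousAt.continuousWithinAt
  obtain ⟨t₀, -, hAmax⟩ := isCompact_Icc.exists_isMaxOn (nonempty_Icc.2 zero_le_one)
    (continuous_nnnorm.comp_continuousOn hA)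
  refine tendsto_iSup_norm_sub_euler (M := K * ‖Abar t₀‖₊)
    (f := fun t z => sigd σ (Abar t z + bbar t)) (fun t ht => ?_)
    (fun t ht => (hHode t ht).hasDerivWithinAt) ?_ (fun L => (hh0 L).trans hH0.symm) hhrec
  · exact ((lipschitzWith_sigd hσLip).comp
      ((isometry_add_right (bbar t)).lipschitz.comp (Abar t).lipschitz)).weaken
      (by rw [one_mul]; gcongr; exact hAmax ht)
  · exact (lipschitzWith_sigd hσLip).continuous.comp_continuousOn ((hA.clm_apply hH).add hb)

/-- **Neural ODE limit (Theorem 4.2, first case).**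
If `σ ∈ C³` with `σ(0) = 0`, `σ'(0) = 1`, bounded third derivative and `σ` Lipschitz,
and `Ā ∈ H¹([0,1], ℝ^{d×d})`, `b̄ ∈ H¹([0,1], ℝ^d)` (expressed by being primitives, on `[0,1]`,
of functions that are square-integrable on `[0,1]`), then the piecewise-constant interpolation
`H̄ᴸ_t = h^{(L)}_⌊Lt⌋` of the ResNet hidden states `h^{(L)}_{k+1} = h^{(L)}_k +
L⁻¹ σ_d(Ā_{k/L} h^{(L)}_k + b̄_{k/L})`, `h^{(L)}_0 = x`, converges uniformly on `[0,1]`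
to the solution `H` of the neural ODE `dH_t/dt = σ_d(Ā_t H_t + b̄_t)`, `H_0 = x`. -/
theorem neural_ode_limit
    (d : ℕ) (hd : 1 ≤ d) (x : EuclideanSpace ℝ (Fin d))
    -- activation function
    (σ : ℝ → ℝ) (hσC3 : ContDiff ℝ 3 σ) (hσ0 : σ 0 = 0) (hσ'0 : deriv σ 0 = 1)
    (C3 : ℝ) (hσ3 : ∀ y : ℝ, |iteratedDeriv 3 σ y| ≤ C3)
    (K : NNReal) (hσLip : LipschitzWith K σ)
    -- weights: Ā, b̄ belong to H¹([0,1])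
    (Abar : ℝ → (EuclideanSpace ℝ (Fin d) →L[ℝ] EuclideanSpace ℝ (Fin d)))
    (bbar : ℝ → EuclideanSpace ℝ (Fin d))
    (A' : ℝ → (EuclideanSpace ℝ (Fin d) →L[ℝ] EuclideanSpace ℝ (Fin d)))
    (b' : ℝ → EuclideanSpace ℝ (Fin d))
    (hA'L2 : MemLp A' 2 (volume.restrict (Icc (0:ℝ) 1)))
    (hb'L2 : MemLp b' 2 (volume.restrict (Icc (0:ℝ) 1)))
    (hAbar : ∀ t ∈ Icc (0:ℝ) 1, Abar t = Abar 0 + ∫ s in (0:ℝ)..t, A' s)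
    (hbbar : ∀ t ∈ Icc (0:ℝ) 1, bbar t = bbar 0 + ∫ s in (0:ℝ)..t, b' s)
    -- hidden states of the residual network of depth L
    (h : ℕ → ℕ → EuclideanSpace ℝ (Fin d))
    (hh0 : ∀ L : ℕ, h L 0 = x)
    (hhrec : ∀ L : ℕ, ∀ k < L, h L (k+1) =
      h L k + ((L:ℝ))⁻¹ • sigd σ (Abar ((k:ℝ)/(L:ℝ)) (h L k) + bbar ((k:ℝ)/(L:ℝ))))
    -- solution of the neural ODE
    (H : ℝ → EuclideanSpace ℝ (Fin d)) (hH0 : H 0 = x)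
    (hHode : ∀ t ∈ Icc (0:ℝ) 1, HasDerivAt H (sigd σ (Abar t (H t) + bbar t)) t) :
    Tendsto (fun L : ℕ => ⨆ t : Icc (0:ℝ) 1, ‖H t - h L ⌊(L:ℝ) * (t:ℝ)⌋₊‖)
      atTop (nhds 0) :=
  neural_ode_limit_general d x σ K hσLip Abar bbar A' b' hA'L2 hb'L2 hAbar hbbar h hh0 hhrec H hH0
    hHode
end

section
/- Uniform boundedness of hidden states. Fix d ≥ 1, an input x ∈ ℝ^d, and σ : ℝ → ℝ Lipschitz with constant C_σ and σ(0) = 0. Let α, β ≥ 0 with α + β = 1, and let Ā : [0,1] → ℝ^{d×d} and b̄ : [0,1] → ℝ^d be continuous. Set A_max = sup_{0≤t≤1} ‖Ā_t‖, b_max = sup_{0≤t≤1} ‖b̄_t‖, and C_max = A_max + b_max. For each L ∈ ℕ define h_0^{(L)} = x and h_{k+1}^{(L)} = h_k^{(L)} + L^{-α} σ_d(L^{-β}(Ā_{k/L} h_k^{(L)} + b̄_{k/L})) for k = 0,…,L−1. Then for every L ≥ 1 and every 0 ≤ j ≤ L, ‖h_j^{(L)}‖ ≤ (‖x‖ + C_σ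 C_max)(1 + C_σ C_max / L)^L ≤ (‖x‖ + C_σ C_max) exp(C_σ C_max). In particular, sup_L max_{0≤k≤L} ‖h_k^{(L)}‖ < ∞. -/
/-!
Since `σ` is `Cσ`-Lipschitz with `σ 0 = 0` and `L^{-α} L^{-β} = 1/L`, each residual step grows the
norm by at most `Cσ ‖Ā_{k/L} h_k + b̄_{k/L}‖ / L ≤ (C/L)(‖h_k‖ + 1)` with `C = Cσ C_max`. The
discrete Grönwall inequality for `u_{k+1} ≤ (1 + C/L) u_k + C/L` gives
`u_j ≤ (u_0 + j C/L)(1 + C/L)^j ≤ (‖x‖ + C)(1 + C/L)^L`, and `(1 + C/L)^L ≤ exp C`.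
-/

open Set

theorem norm_sigd_le {d : ℕ} {σ : ℝ → ℝ} {K : NNReal} (hσ : LipschitzWith K σ) (hσ0 : σ 0 = 0)
    (z : EuclideanSpace ℝ (Fin d)) : ‖sigd σ z‖ ≤ K * ‖z‖ := by
  have hcoord (i : Fin d) : ‖σ (z i)‖ ≤ ‖(K : ℝ) • z i‖ := by
    simpa [hσ0, Real.dist_eq, abs_of_nonneg K.coe_nonneg] using hσ.dist_le_mul (z i) 0
  calc ‖sigd σ z‖ ≤ ‖(K : ℝ) • z‖ := by
        simp only [EuclideanSpace.norm_eq, sigd, PiLp.smul_apply]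
        gcongr with i
        exact hcoord i
    _ = K * ‖z‖ := by rw [norm_smul, Real.norm_of_nonneg K.coe_nonneg]

theorem norm_add_rpow_smul_sigd_le {d : ℕ} {σ : ℝ → ℝ} {K : NNReal} (hσ : LipschitzWith K σ)
    (hσ0 : σ 0 = 0) {α β L : ℝ} (hL : 0 < L) (hαβ : α + β = 1) (v w : EuclideanSpace ℝ (Fin d)) :
    ‖v + L ^ (-α) • sigd σ (L ^ (-β) • w)‖ ≤ ‖v‖ + K * ‖w‖ / L := by
  have hLα : 0 ≤ L ^ (-α) := Real.rpow_nonneg hL.le _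
  have hLβ : 0 ≤ L ^ (-β) := Real.rpow_nonneg hL.le _
  have hprod : L ^ (-α) * L ^ (-β) = L⁻¹ := by
    rw [← Real.rpow_add hL, ← neg_add, hαβ, Real.rpow_neg_one]
  calc ‖v + L ^ (-α) • sigd σ (L ^ (-β) • w)‖
      ≤ ‖v‖ + L ^ (-α) * (K * (L ^ (-β) * ‖w‖)) := by
        refine (norm_add_le _ _).trans ?_
        rw [norm_smul, Real.norm_of_nonneg hLα]
        gcongr
        refine (norm_sigd_le hσ hσ0 _).trans_eq ?_
        rw [norm_smul, Real.norm_of_nonneg hLβ]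
    _ = ‖v‖ + K * ‖w‖ / L := by rw [div_eq_mul_inv, ← hprod]; ring

theorem norm_add_rpow_smul_sigd_apply_add_le {d : ℕ} {σ : ℝ → ℝ} {K : NNReal}
    (hσ : LipschitzWith K σ) (hσ0 : σ 0 = 0) {α β L : ℝ} (hL : 0 < L) (hαβ : α + β = 1)
    {A : EuclideanSpace ℝ (Fin d) →L[ℝ] EuclideanSpace ℝ (Fin d)} {b : EuclideanSpace ℝ (Fin d)}
    {a : ℝ} (hA : ‖A‖ ≤ a) (hb : ‖b‖ ≤ a) (v : EuclideanSpace ℝ (Fin d)) :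
    ‖v + L ^ (-α) • sigd σ (L ^ (-β) • (A v + b))‖ ≤ (1 + K * a / L) * ‖v‖ + K * a / L := by
  have hAvb : ‖A v + b‖ ≤ a * ‖v‖ + a :=
    (norm_add_le _ _).trans (add_le_add (A.le_of_opNorm_le hA v) hb)
  calc _ ≤ ‖v‖ + K * ‖A v + b‖ / L := norm_add_rpow_smul_sigd_le hσ hσ0 hL hαβ _ _
    _ ≤ ‖v‖ + K * (a * ‖v‖ + a) / L := by gcongr
    _ = _ := by ring

theorem norm_le_iSup_norm_of_continuousOn {X E : Type*} [TopologicalSpace X]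
    [SeminormedAddCommGroup E] {f : X → E} {s : Set X} (hs : IsCompact s) (hf : ContinuousOn f s)
    {t : X} (ht : t ∈ s) : ‖f t‖ ≤ ⨆ t : s, ‖f t‖ := by
  refine le_ciSup (f := fun t : s => ‖f t‖) ?_ ⟨t, ht⟩
  simpa only [image_eq_range] using hs.bddAbove_image hf.norm

theorem le_add_mul_one_add_pow {u : ℕ → ℝ} {a b : ℝ} {n : ℕ} (ha : 0 ≤ a) (hb : 0 ≤ b)
    (hu : ∀ k < n, u (k + 1) ≤ (1 + a) * u k + b) : ∀ k ≤ n, u k ≤ (u 0 + k * b) * (1 + a) ^ k := by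
  intro k hk
  induction k with
  | zero => simp
  | succ k ih =>
    have hpow : 1 ≤ (1 + a) ^ (k + 1) := one_le_pow₀ (by linarith)
    calc u (k + 1) ≤ (1 + a) * ((u 0 + k * b) * (1 + a) ^ k) + b * 1 := by
          rw [mul_one]
          exact (hu k hk).trans (by gcongr; exact ih (by omega))
      _ ≤ (1 + a) * ((u 0 + k * b) * (1 + a) ^ k) + b * (1 + a) ^ (k + 1) := by gcongr
      _ = (u 0 + (k + 1 : ℕ) * b) * (1 + a) ^ (k + 1) := by push_cast; ring

theorem one_add_div_pow_le_exp (n : ℕ) {c : ℝ} (hc : -n ≤ c) : (1 + c / n) ^ n ≤ Real.exp c := by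
  simpa [sub_eq_add_neg, neg_div] using Real.one_sub_div_pow_le_exp_neg (t := -c) (by linarith)

theorem hidden_states_uniformly_bounded_general
    (d : ℕ) (x : EuclideanSpace ℝ (Fin d))
    -- activation function: Lipschitz with constant Cσ and σ(0) = 0
    (σ : ℝ → ℝ) (Cσ : NNReal) (hσLip : LipschitzWith Cσ σ) (hσ0 : σ 0 = 0)
    -- scaling exponents
    (α β : ℝ) (hαβ : α + β = 1)
    -- weights
    (Abar : ℝ → (EuclideanSpace ℝ (Fin d) →L[ℝ] EuclideanSpace ℝ (Fin d)))
    (bbar : ℝ → EuclideanSpace ℝ (Fin d))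
    (hAc : ContinuousOn Abar (Icc (0:ℝ) 1))
    (hbc : ContinuousOn bbar (Icc (0:ℝ) 1))
    -- the suprema of the weight norms
    (Amax bmax Cmax : ℝ)
    (hAmax : Amax = ⨆ t : Icc (0:ℝ) 1, ‖Abar t‖)
    (hbmax : bmax = ⨆ t : Icc (0:ℝ) 1, ‖bbar t‖)
    (hCmax : Cmax = Amax + bmax)
    -- hidden states of the residual network of depth L
    (h : ℕ → ℕ → EuclideanSpace ℝ (Fin d))
    (hh0 : ∀ L : ℕ, h L 0 = x)
    (hhrec : ∀ L : ℕ, ∀ k < L, h L (k+1) =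
      h L k + ((L:ℝ) ^ (-α)) •
        sigd σ (((L:ℝ) ^ (-β)) • (Abar ((k:ℝ)/(L:ℝ)) (h L k) + bbar ((k:ℝ)/(L:ℝ))))) :
    (∀ L : ℕ, 1 ≤ L → ∀ j ≤ L,
        ‖h L j‖ ≤ (‖x‖ + (Cσ:ℝ) * Cmax) * (1 + (Cσ:ℝ) * Cmax / (L:ℝ)) ^ L ∧
        (‖x‖ + (Cσ:ℝ) * Cmax) * (1 + (Cσ:ℝ) * Cmax / (L:ℝ)) ^ L ≤
          (‖x‖ + (Cσ:ℝ) * Cmax) * Real.exp ((Cσ:ℝ) * Cmax)) ∧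
    ∃ C : ℝ, ∀ L : ℕ, 1 ≤ L → ∀ k ≤ L, ‖h L k‖ ≤ C := by
  have hAmax0 : 0 ≤ Amax := hAmax ▸ Real.iSup_nonneg fun _ ↦ norm_nonneg _
  have hbmax0 : 0 ≤ bmax := hbmax ▸ Real.iSup_nonneg fun _ ↦ norm_nonneg _
  have hA (t) (ht : t ∈ Icc (0 : ℝ) 1) : ‖Abar t‖ ≤ Cmax :=
    (hAmax ▸ norm_le_iSup_norm_of_continuousOn isCompact_Icc hAc ht).trans (by linarith)
  have hb (t) (ht : t ∈ Icc (0 : ℝ) 1) : ‖bbar t‖ ≤ Cmax :=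
    (hbmax ▸ norm_le_iSup_norm_of_continuousOn isCompact_Icc hbc ht).trans (by linarith)
  set C : ℝ := Cσ * Cmax
  have hC : 0 ≤ C := mul_nonneg Cσ.coe_nonneg (by linarith)
  have hbound (L : ℕ) (hL : 1 ≤ L) (j : ℕ) (hj : j ≤ L) :
      ‖h L j‖ ≤ (‖x‖ + C) * (1 + C / L) ^ L := by
    have hLpos : (0 : ℝ) < L := by exact_mod_cast hL
    have hCL : 0 ≤ C / L := div_nonneg hC hLpos.le
    have hstep (k : ℕ) (hk : k < L) : ‖h L (k + 1)‖ ≤ (1 + C / L) * ‖h L k‖ + C / L := by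
      have hkL : (k : ℝ) / L ∈ Icc (0 : ℝ) 1 :=
        ⟨by positivity, (div_le_one hLpos).2 (by exact_mod_cast hk.le)⟩
      rw [hhrec L k hk]
      exact norm_add_rpow_smul_sigd_apply_add_le hσLip hσ0 hLpos hαβ (hA _ hkL) (hb _ hkL) _
    calc ‖h L j‖ ≤ (‖x‖ + j * (C / L)) * (1 + C / L) ^ j :=
          hh0 L ▸ le_add_mul_one_add_pow (u := fun k ↦ ‖h L k‖) hCL hCL hstep j hj
      _ ≤ (‖x‖ + L * (C / L)) * (1 + C / L) ^ L := by
          gcongr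
          exact le_add_of_nonneg_right hCL
      _ = (‖x‖ + C) * (1 + C / L) ^ L := by rw [mul_div_cancel₀ _ hLpos.ne']
  have hexp (L : ℕ) : (‖x‖ + C) * (1 + C / L) ^ L ≤ (‖x‖ + C) * Real.exp C := by
    gcongr
    exact one_add_div_pow_le_exp L (by linarith [L.cast_nonneg (α := ℝ)])
  exact ⟨fun L hL j hj ↦ ⟨hbound L hL j hj, hexp L⟩,
    _, fun L hL k hk ↦ (hbound L hL k hk).trans (hexp L)⟩

/-- **Uniform boundedness of hidden states.**
If `σ` is Lipschitz with constant `Cσ`, `σ(0) = 0`, `α, β ≥ 0` with `α + β = 1`, and `Ā`, `b̄`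
are continuous on `[0,1]`, then the ResNet hidden states
`h^{(L)}_{k+1} = h^{(L)}_k + L^{-α} σ_d(L^{-β}(Ā_{k/L} h^{(L)}_k + b̄_{k/L}))`, `h^{(L)}_0 = x`,
satisfy `‖h^{(L)}_j‖ ≤ (‖x‖ + Cσ C_max)(1 + Cσ C_max/L)^L ≤ (‖x‖ + Cσ C_max) exp(Cσ C_max)`
for all `L ≥ 1` and `0 ≤ j ≤ L`; in particular they are bounded uniformly in `L`. -/
theorem hidden_states_uniformly_bounded
    (d : ℕ) (hd : 1 ≤ d) (x : EuclideanSpace ℝ (Fin d))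
    -- activation function: Lipschitz with constant Cσ and σ(0) = 0
    (σ : ℝ → ℝ) (Cσ : NNReal) (hσLip : LipschitzWith Cσ σ) (hσ0 : σ 0 = 0)
    -- scaling exponents
    (α β : ℝ) (hα : 0 ≤ α) (hβ : 0 ≤ β) (hαβ : α + β = 1)
    -- weights
    (Abar : ℝ → (EuclideanSpace ℝ (Fin d) →L[ℝ] EuclideanSpace ℝ (Fin d)))
    (bbar : ℝ → EuclideanSpace ℝ (Fin d))
    (hAc : ContinuousOn Abar (Icc (0:ℝ) 1))
    (hbc : ContinuousOn bbar (Icc (0:ℝ) 1))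
    -- the suprema of the weight norms
    (Amax bmax Cmax : ℝ)
    (hAmax : Amax = ⨆ t : Icc (0:ℝ) 1, ‖Abar t‖)
    (hbmax : bmax = ⨆ t : Icc (0:ℝ) 1, ‖bbar t‖)
    (hCmax : Cmax = Amax + bmax)
    -- hidden states of the residual network of depth L
    (h : ℕ → ℕ → EuclideanSpace ℝ (Fin d))
    (hh0 : ∀ L : ℕ, h L 0 = x)
    (hhrec : ∀ L : ℕ, ∀ k < L, h L (k+1) =
      h L k + ((L:ℝ) ^ (-α)) •
        sigd σ (((L:ℝ) ^ (-β)) • (Abar ((k:ℝ)/(L:ℝ)) (h L k) + bbar ((k:ℝ)/(L:ℝ))))) :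
    (∀ L : ℕ, 1 ≤ L → ∀ j ≤ L,
        ‖h L j‖ ≤ (‖x‖ + (Cσ:ℝ) * Cmax) * (1 + (Cσ:ℝ) * Cmax / (L:ℝ)) ^ L ∧
        (‖x‖ + (Cσ:ℝ) * Cmax) * (1 + (Cσ:ℝ) * Cmax / (L:ℝ)) ^ L ≤
          (‖x‖ + (Cσ:ℝ) * Cmax) * Real.exp ((Cσ:ℝ) * Cmax)) ∧
    ∃ C : ℝ, ∀ L : ℕ, 1 ≤ L → ∀ k ≤ L, ‖h L k‖ ≤ C :=
  hidden_states_uniformly_bounded_general d x σ Cσ hσLip hσ0 α β hαβ Abar bbar hAc hbc Amax bmax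
    Cmax hAmax hbmax hCmax h hh0 hhrec
end
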